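/- arXiv:1410.6266 — 3 statements merged into one kernel-verified Lean document; each statement's English description precedes it below -/
import Mathlib

section
/- For all complex numbers z, the product of the two entire power series f(z) = ∑_{m≥0} (-1)^m (z/2)^{2m}/(m! Γ(μ+m+1)) and g(z) = ∑_{k≥0} (z/2)^{2k}/(k! Γ(ν+k+1)) equals ∑_{n≥0} (-1)^n (z/2)^{2n} · ₂F₁(-n, -μ-n; ν+1; -1) / (n! Γ(μ+n+1) Γ(ν+1)), provided μ, ν > -1. -/
/-!
Both series converge absolutely (eventually `Γ(μ + m + 1) ≥ 1`), so their product is the Cauchy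
product. In the coefficient of `(z/2)^(2n)`, the term with `k` from the second series matches the
`k`-th term of `₂F₁(-n, -μ-n; ν+1; -1)`: reflection turns `(-n)_k` into `(-1)^k n!/(n-k)!` and
`(-μ-n)_k` into `(-1)^k (μ+n-k+1)_k`, and the Pochhammer symbols are absorbed by
`Γ(x + k) = (x)_k Γ(x)`.
-/

open Complex Finset

/-- Pochhammer symbol `(a)_m` for a complex number `a`. -/
noncomputable def poch (a : ℂ) (m : ℕ) : ℂ := ∏ j ∈ Finset.range m, (a + j)

/-- Terminating Gaussian hypergeometric sum `₂F₁(-n, b; c; x)`. -/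
noncomputable def hyp2F1neg (n : ℕ) (b c x : ℂ) : ℂ :=
  ∑ m ∈ Finset.range (n + 1), poch (-(n : ℂ)) m * poch b m / (poch c m * m.factorial) * x ^ m

open Nat Polynomial

lemma poch_eq_eval_ascPochhammer (a : ℂ) (m : ℕ) : poch a m = (ascPochhammer ℂ m).eval a := by
  induction m with
  | zero => simp [poch]
  | succ m ih => rw [poch, prod_range_succ, ← poch, ih, ascPochhammer_succ_eval]

lemma poch_neg (a : ℂ) (k : ℕ) : poch (-a) k = (-1) ^ k * poch (a - k + 1) k := by
  rw [poch_eq_eval_ascPochhammer, poch_eq_eval_ascPochhammer,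
    ascPochhammer_eval_neg_eq_descPochhammer, descPochhammer_eval_eq_ascPochhammer]

lemma poch_neg_natCast_mul_factorial (m k : ℕ) :
    poch (-((m + k : ℕ) : ℂ)) k * m ! = (-1) ^ k * (m + k)! := by
  rw [poch_neg, ← factorial_mul_ascPochhammer ℂ m k, ← poch_eq_eval_ascPochhammer]
  push_cast
  ring_nf

lemma poch_ne_zero {x : ℂ} (hx : ∀ j : ℕ, x + j ≠ 0) (k : ℕ) : poch x k ≠ 0 :=
  prod_ne_zero_iff.2 fun j _ => hx j

lemma Gamma_ne_zero_of_add_natCast_ne_zero {x : ℂ} (hx : ∀ j : ℕ, x + j ≠ 0) : Gamma x ≠ 0 :=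
  Gamma_ne_zero fun j h => hx j (by rw [h]; ring)

lemma Gamma_add_natCast {x : ℂ} (hx : ∀ j : ℕ, x + j ≠ 0) (k : ℕ) :
    Gamma (x + k) = poch x k * Gamma x := by
  rw [poch_eq_eval_ascPochhammer, ← Gamma_add_nat_div_Gamma_eq x fun j h => hx j (by rw [h]; ring),
    div_mul_cancel₀ _ (Gamma_ne_zero_of_add_natCast_ne_zero hx)]

lemma one_le_norm_Gamma {x : ℝ} (hx : 2 ≤ x) : 1 ≤ ‖Gamma x‖ := by
  rw [Gamma_ofReal, norm_real, Real.norm_of_nonneg (Real.Gamma_pos_of_pos (by linarith)).le,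
    ← Real.Gamma_two]
  exact Real.Gamma_strictMonoOn_Ici.monotoneOn (Set.mem_Ici.2 le_rfl) hx hx

lemma summable_norm_pow_div_factorial_mul_Gamma (μ : ℝ) (w : ℂ) :
    Summable fun m : ℕ => ‖w ^ m / (m ! * Gamma (μ + m + 1))‖ := by
  refine Summable.of_norm_bounded_eventually_nat (Real.summable_pow_div_factorial ‖w‖) ?_
  obtain ⟨N, hN⟩ := exists_nat_ge (1 - μ)
  filter_upwards [Filter.eventually_ge_atTop N] with m hm
  have hΓ : 1 ≤ ‖Gamma (μ + m + 1)‖ := by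
    have hcast : ((μ + m + 1 : ℝ) : ℂ) = μ + m + 1 := by push_cast; ring
    rw [← hcast]
    have hNm : (N : ℝ) ≤ m := by exact_mod_cast hm
    exact one_le_norm_Gamma (by linarith)
  rw [norm_norm, norm_div, norm_mul, norm_pow, Complex.norm_natCast]
  gcongr
  exact le_mul_of_one_le_right (by positivity) hΓ

noncomputable def hyp2F1negTerm (n : ℕ) (b c x : ℂ) (m : ℕ) : ℂ :=
  poch (-(n : ℂ)) m * poch b m / (poch c m * m !) * x ^ m

lemma hyp2F1neg_eq_sum (n : ℕ) (b c x : ℂ) :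
    hyp2F1neg n b c x = ∑ m ∈ range (n + 1), hyp2F1negTerm n b c x m := rfl

lemma cauchy_product_term_eq_hyp2F1negTerm {μ ν : ℂ} (hμ : ∀ j : ℕ, μ + j + 1 ≠ 0)
    (hν : ∀ j : ℕ, ν + j + 1 ≠ 0) (w : ℂ) (m k : ℕ) :
    (-1) ^ m * w ^ m / (m ! * Gamma (μ + m + 1)) * (w ^ k / (k ! * Gamma (ν + k + 1))) =
      (-1) ^ (m + k) * w ^ (m + k) * hyp2F1negTerm (m + k) (-μ - (m + k : ℕ)) (ν + 1) (-1) k /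
        ((m + k)! * Gamma (μ + (m + k : ℕ) + 1) * Gamma (ν + 1)) := by
  have hμm : ∀ j : ℕ, μ + m + 1 + j ≠ 0 := fun j => by
    convert hμ (m + j) using 1; push_cast; ring
  have hν1 : ∀ j : ℕ, ν + 1 + j ≠ 0 := fun j => by
    convert hν j using 1; ring
  have hpoch_nat : poch (-((m + k : ℕ) : ℂ)) k = (-1) ^ k * (m + k)! / m ! := by
    rw [eq_div_iff (Nat.cast_ne_zero.2 m.factorial_ne_zero), poch_neg_natCast_mul_factorial]
  have hpoch_μ : poch (-μ - (m + k : ℕ)) k = (-1) ^ k * poch (μ + m + 1) k := by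
    rw [show -μ - (m + k : ℕ) = -(μ + (m + k : ℕ)) by ring, poch_neg]
    congr 2; push_cast; ring
  have hΓμ : Gamma (μ + (m + k : ℕ) + 1) = poch (μ + m + 1) k * Gamma (μ + m + 1) := by
    rw [← Gamma_add_natCast hμm]; congr 1; push_cast; ring
  have hΓν : Gamma (ν + k + 1) = poch (ν + 1) k * Gamma (ν + 1) := by
    rw [← Gamma_add_natCast hν1]; congr 1; ring
  have hpoch_μ_ne := poch_ne_zero hμm k
  have hpoch_ν_ne := poch_ne_zero hν1 k
  have hΓμ_ne := Gamma_ne_zero_of_add_natCast_ne_zero hμm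
  have hΓν_ne := Gamma_ne_zero_of_add_natCast_ne_zero hν1
  have hfact_ne : ((m + k)! : ℂ) ≠ 0 := Nat.cast_ne_zero.2 (m + k).factorial_ne_zero
  have hsign : ((-1) ^ (k * 4) : ℂ) = 1 := by rw [pow_mul']; norm_num
  rw [hyp2F1negTerm, hpoch_nat, hpoch_μ, hΓμ, hΓν]
  field_simp
  ring_nf
  rw [hsign, mul_one]

theorem stmt0 (μ ν : ℝ) (hμ : -1 < μ) (hν : -1 < ν) (z : ℂ) :
    (∑' m : ℕ, (-1) ^ m * (z / 2) ^ (2 * m) / (m.factorial * Complex.Gamma ((μ : ℂ) + m + 1))) *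
      (∑' k : ℕ, (z / 2) ^ (2 * k) / (k.factorial * Complex.Gamma ((ν : ℂ) + k + 1))) =
    ∑' n : ℕ, (-1) ^ n * (z / 2) ^ (2 * n) *
        hyp2F1neg n (-(μ : ℂ) - n) ((ν : ℂ) + 1) (-1) /
      (n.factorial * Complex.Gamma ((μ : ℂ) + n + 1) * Complex.Gamma ((ν : ℂ) + 1)) := by
  have not_pole {a : ℝ} (ha : -1 < a) (j : ℕ) : (a : ℂ) + j + 1 ≠ 0 := fun h => by
    have : a + j + 1 = 0 := by exact_mod_cast h
    linarith [j.cast_nonneg (α := ℝ)]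
  simp only [pow_mul]
  set w := (z / 2) ^ 2
  have hf := (summable_norm_pow_div_factorial_mul_Gamma μ (-w)).congr fun m => by rw [neg_pow]
  rw [tsum_mul_tsum_eq_tsum_sum_antidiagonal_of_summable_norm hf
    (summable_norm_pow_div_factorial_mul_Gamma ν w)]
  refine tsum_congr fun n => ?_
  rw [← Nat.sum_antidiagonal_swap]
  simp only [Prod.fst_swap, Prod.snd_swap]
  rw [Nat.sum_antidiagonal_eq_sum_range_succ
    (fun k m => (-1) ^ m * w ^ m / (m ! * Gamma (μ + m + 1)) * (w ^ k / (k ! * Gamma (ν + k + 1)))),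
    hyp2F1neg_eq_sum, mul_sum, sum_div]
  refine sum_congr rfl fun k hk => ?_
  obtain ⟨m, rfl⟩ : ∃ m, n = m + k := ⟨n - k, by have := mem_range.1 hk; omega⟩
  rw [Nat.add_sub_cancel]
  exact cauchy_product_term_eq_hyp2F1negTerm (not_pole hμ) (not_pole hν) w m k
end

section
/- Let (z_n) be a sequence of complex numbers, all with the same argument, with |z_n| > 1, such that ∑ 1/|z_n| converges and f(z) = z ∏_{n≥1}(1 - z/z_n) defines an entire function. If ∑_{n≥1} 1/(|z_n| - 1) ≤ 1, then f is starlike (univalent with f(D) a starlike domain with respect to 0) on the open unit disk D. -/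
/-!
Write `f w = w * exp (M w)` with `M w = ∑' n, log (1 - w / z n)`. On the closed unit disk the
`n`-th term is `1 / (‖z n‖ - 1)`-Lipschitz, so the hypothesis makes `M` `1`-Lipschitz there.

Injectivity: if `a e^{M a} = b e^{M b}` with `Re M b ≤ Re M a`, then
`‖a - b‖ = ‖b‖ ‖e^{M b - M a} - 1‖ ≤ ‖b‖ ‖M b - M a‖ ≤ ‖b‖ ‖a - b‖`, and `‖b‖ < 1`.

Starlikeness is proved in logarithmic coordinates: `f (e^s) = exp (Φ s)` with `Φ s = s + M (e^s)`
on the half-plane `Re s < 0`, so it suffices that `Φ s₀ - x` is a value of `Φ` there for every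
`x ≥ 0`. The set of such `x` is open by the open mapping theorem. It is closed because `Φ s - s`
is bounded, so solutions stay in a compact part of `Re s ≤ 0`, and because on the line `Re s = 0`
the value `Φ s₀ - x` with `x > 0` is never taken:
`‖s₀ - s - x‖ > ‖s₀ - s‖ ≥ ‖e^{s₀} - e^s‖ ≥ ‖M (e^{s₀}) - M (e^s)‖`.
-/

open Complex Metric Set

theorem Summable.one_div_sub_one {a : ℕ → ℝ} (ha : Summable fun n => 1 / a n)
    (ha₀ : ∀ n, a n ≠ 0) : Summable fun n => 1 / (a n - 1) := by
  refine (ha.abs.mul_left 2).of_norm_bounded_eventually_nat ?_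
  filter_upwards [ha.abs.tendsto_atTop_zero.eventually
    (eventually_le_nhds (by norm_num : (0 : ℝ) < 1 / 2))] with n hn
  have h2 : 2 ≤ |a n| := by
    rw [abs_div, abs_one, div_le_iff₀ (abs_pos.mpr (ha₀ n))] at hn
    linarith
  have h1 : |a n| / 2 ≤ |a n - 1| := by
    have := abs_sub_abs_le_abs_sub (a n) 1
    rw [abs_one] at this
    linarith
  simp only [Real.norm_eq_abs, abs_div, abs_one]
  rw [div_le_iff₀ (by linarith)]
  field_simp
  linarith

theorem norm_lt_norm_sub_ofReal {u : ℂ} (hu : u.re ≤ 0) {x : ℝ} (hx : 0 < x) :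
    ‖u‖ < ‖u - x‖ := by
  rw [← sq_lt_sq₀ (norm_nonneg _) (norm_nonneg _), Complex.sq_norm, Complex.sq_norm,
    normSq_apply, normSq_apply]
  simp only [sub_re, ofReal_re, sub_im, ofReal_im, sub_zero]
  nlinarith

theorem mapsTo_exp_re_nonpos : MapsTo exp {s : ℂ | s.re ≤ 0} (closedBall 0 1) := fun s hs => by
  simpa [norm_exp] using hs

theorem mapsTo_exp_re_neg : MapsTo exp {s : ℂ | s.re < 0} (ball 0 1) := fun s hs => by
  simpa [norm_exp] using hs

theorem norm_exp_sub_exp_le_of_re_nonpos {a b : ℂ} (ha : a.re ≤ 0) (hb : b.re ≤ 0) :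
    ‖exp a - exp b‖ ≤ ‖a - b‖ := by
  simpa using (convex_halfSpace_re_le 0).norm_image_sub_le_of_norm_hasDerivWithin_le
    (fun w _ => (hasDerivAt_exp w).hasDerivWithinAt)
    (fun w hw => mem_closedBall_zero_iff.mp (mapsTo_exp_re_nonpos hw)) hb ha

theorem one_sub_div_mem_slitPlane {w ζ : ℂ} (hw : ‖w‖ < ‖ζ‖) : 1 - w / ζ ∈ slitPlane := by
  rw [sub_eq_add_neg]
  refine mem_slitPlane_of_norm_lt_one ?_
  rw [norm_neg, norm_div, div_lt_one (by linarith [norm_nonneg w])]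
  exact hw

theorem norm_log_one_sub_div_sub_le {ζ a b : ℂ} {r : ℝ} (hr : r < ‖ζ‖) (ha : ‖a‖ ≤ r)
    (hb : ‖b‖ ≤ r) : ‖log (1 - a / ζ) - log (1 - b / ζ)‖ ≤ ‖a - b‖ / (‖ζ‖ - r) := by
  have hζ : ζ ≠ 0 := norm_pos_iff.mp (by linarith [norm_nonneg a])
  have hderiv : ∀ w ∈ closedBall (0 : ℂ) r,
      HasDerivAt (fun w => log (1 - w / ζ)) (-(ζ - w)⁻¹) w := by
    intro w hw
    have hw' : ‖w‖ < ‖ζ‖ := (mem_closedBall_zero_iff.mp hw).trans_lt hr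
    refine (((hasDerivAt_id w).div_const ζ).const_sub 1 |>.clog
      (one_sub_div_mem_slitPlane hw')).congr_deriv ?_
    have : ζ - w ≠ 0 := sub_ne_zero.mpr (by rintro rfl; exact hw'.false)
    simp only [id]
    field_simp
  have hbound : ∀ w ∈ closedBall (0 : ℂ) r, ‖-(ζ - w)⁻¹‖ ≤ (‖ζ‖ - r)⁻¹ := by
    intro w hw
    rw [norm_neg, norm_inv]
    refine inv_anti₀ (by linarith) ?_
    linarith [norm_sub_norm_le ζ w, mem_closedBall_zero_iff.mp hw]
  simpa [div_eq_inv_mul] using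
    (convex_closedBall (0 : ℂ) r).norm_image_sub_le_of_norm_hasDerivWithin_le
      (fun w hw => (hderiv w hw).hasDerivWithinAt) hbound (mem_closedBall_zero_iff.mpr hb)
      (mem_closedBall_zero_iff.mpr ha)

theorem norm_log_one_sub_div_le {ζ w : ℂ} (hζ : 1 < ‖ζ‖) (hw : ‖w‖ ≤ 1) :
    ‖log (1 - w / ζ)‖ ≤ 1 / (‖ζ‖ - 1) := by
  have hζ₁ : 0 < ‖ζ‖ - 1 := by linarith
  calc ‖log (1 - w / ζ)‖ ≤ ‖w - 0‖ / (‖ζ‖ - 1) := by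
        simpa using norm_log_one_sub_div_sub_le hζ hw (norm_zero.trans_le zero_le_one)
    _ ≤ 1 / (‖ζ‖ - 1) := by rw [sub_zero]; gcongr

section Product

variable {z : ℕ → ℂ} (hz : ∀ n, 1 < ‖z n‖) (hS : Summable fun n => 1 / (‖z n‖ - 1))
include hz hS

theorem summable_log_one_sub_div {w : ℂ} (hw : ‖w‖ ≤ 1) :
    Summable fun n => log (1 - w / z n) :=
  hS.of_norm_bounded fun n => norm_log_one_sub_div_le (hz n) hw

theorem tprod_one_sub_div_eq_exp_tsum {w : ℂ} (hw : ‖w‖ ≤ 1) :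
    ∏' n, (1 - w / z n) = exp (∑' n, log (1 - w / z n)) :=
  (cexp_tsum_eq_tprod (fun n => slitPlane_ne_zero (one_sub_div_mem_slitPlane
    (hw.trans_lt (hz n)))) (summable_log_one_sub_div hz hS hw)).symm

theorem differentiableOn_tsum_log_one_sub_div :
    DifferentiableOn ℂ (fun w => ∑' n, log (1 - w / z n)) (ball 0 1) := by
  refine differentiableOn_tsum_of_summable_norm hS (fun n w hw => ?_) isOpen_ball
    fun n w hw => norm_log_one_sub_div_le (hz n) (mem_ball_zero_iff.mp hw).le
  have hw' : ‖w‖ < ‖z n‖ := (mem_ball_zero_iff.mp hw).trans (hz n)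
  have hd : DifferentiableAt ℂ (fun w => 1 - w / z n) w := by fun_prop
  exact (hd.clog (one_sub_div_mem_slitPlane hw')).differentiableWithinAt

theorem lipschitzOnWith_tsum_log_one_sub_div (h : ∑' n, 1 / (‖z n‖ - 1) ≤ 1) :
    LipschitzOnWith 1 (fun w => ∑' n, log (1 - w / z n)) (closedBall 0 1) := by
  refine LipschitzOnWith.mk_one fun a ha b hb => ?_
  rw [mem_closedBall_zero_iff] at ha hb
  have hterm : ∀ n, ‖log (1 - a / z n) - log (1 - b / z n)‖ ≤ ‖a - b‖ * (1 / (‖z n‖ - 1)) :=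
    fun n => by rw [mul_one_div]; exact norm_log_one_sub_div_sub_le (hz n) ha hb
  rw [dist_eq_norm, dist_eq_norm,
    ← (summable_log_one_sub_div hz hS ha).tsum_sub (summable_log_one_sub_div hz hS hb)]
  calc ‖∑' n, (log (1 - a / z n) - log (1 - b / z n))‖
      ≤ ∑' n, ‖a - b‖ * (1 / (‖z n‖ - 1)) := tsum_of_norm_bounded (hS.mul_left _).hasSum hterm
    _ = ‖a - b‖ * ∑' n, 1 / (‖z n‖ - 1) := tsum_mul_left
    _ ≤ ‖a - b‖ := mul_le_of_le_one_right (norm_nonneg _) h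

end Product

theorem injOn_mul_exp_of_lipschitzOnWith {M : ℂ → ℂ} (hM : LipschitzOnWith 1 M (ball 0 1)) :
    InjOn (fun w => w * exp (M w)) (ball 0 1) := by
  intro a ha b hb hab
  wlog hre : (M b).re ≤ (M a).re generalizing a b
  · exact (this hb ha hab.symm (le_of_not_ge hre)).symm
  have hdiff : a - b = b * (exp (M b - M a) - exp 0) := by
    rw [exp_sub, exp_zero]
    field_simp
    linear_combination hab
  have hle : ‖a - b‖ ≤ ‖b‖ * ‖a - b‖ :=
    calc ‖a - b‖ = ‖b‖ * ‖exp (M b - M a) - exp 0‖ := by rw [hdiff, norm_mul]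
      _ ≤ ‖b‖ * ‖M b - M a‖ := by
        gcongr
        simpa using norm_exp_sub_exp_le_of_re_nonpos (a := M b - M a)
          (by rw [sub_re]; linarith) (le_refl (0 : ℂ).re)
      _ ≤ ‖b‖ * ‖a - b‖ := by
        gcongr
        simpa [norm_sub_rev a] using hM.norm_sub_le hb ha
  have hb₁ : ‖b‖ < 1 := mem_ball_zero_iff.mp hb
  have : ‖a - b‖ = 0 := by nlinarith [norm_nonneg (a - b)]
  exact sub_eq_zero.mp (norm_eq_zero.mp this)

section LipschitzExponent

variable {M : ℂ → ℂ} (hM : LipschitzOnWith 1 M (closedBall 0 1))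
include hM

theorem norm_sub_comp_exp_le_two {s s' : ℂ} (hs : s.re ≤ 0) (hs' : s'.re ≤ 0) :
    ‖M (exp s) - M (exp s')‖ ≤ 2 := by
  calc ‖M (exp s) - M (exp s')‖ ≤ ‖exp s - exp s'‖ := by
        simpa using hM.norm_sub_le (mapsTo_exp_re_nonpos hs) (mapsTo_exp_re_nonpos hs')
    _ ≤ ‖exp s‖ + ‖exp s'‖ := norm_sub_le _ _
    _ ≤ 1 + 1 := add_le_add (mem_closedBall_zero_iff.mp (mapsTo_exp_re_nonpos hs))
        (mem_closedBall_zero_iff.mp (mapsTo_exp_re_nonpos hs'))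
    _ = 2 := one_add_one_eq_two

theorem continuousOn_add_comp_exp :
    ContinuousOn (fun s => s + M (exp s)) {s | s.re ≤ 0} :=
  continuousOn_id.add (hM.continuousOn.comp continuous_exp.continuousOn mapsTo_exp_re_nonpos)

theorem isOpen_image_add_comp_exp (hMd : DifferentiableOn ℂ M (ball 0 1)) :
    IsOpen ((fun s => s + M (exp s)) '' {s | s.re < 0}) := by
  have hH : IsOpen {s : ℂ | s.re < 0} := isOpen_lt continuous_re continuous_const
  have hΦ : AnalyticOnNhd ℂ (fun s => s + M (exp s)) {s | s.re < 0} :=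
    (differentiableOn_id.add (hMd.comp differentiable_exp.differentiableOn
      mapsTo_exp_re_neg)).analyticOnNhd hH
  rcases hΦ.is_constant_or_isOpen (convex_halfSpace_re_lt 0).isPreconnected with ⟨c, hc⟩ | hopen
  · have h₁ : (-1 : ℂ) + M (exp (-1)) = c := hc _ (by norm_num)
    have h₄ : (-4 : ℂ) + M (exp (-4)) = c := hc _ (by norm_num)
    have : ‖M (exp (-4)) - M (exp (-1))‖ ≤ 2 :=
      norm_sub_comp_exp_le_two hM (by norm_num) (by norm_num)
    rw [show M (exp (-4)) - M (exp (-1)) = 3 by linear_combination h₄ - h₁] at this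
    norm_num at this
  · exact hopen _ subset_rfl hH

theorem add_comp_exp_ne_sub_of_re_eq_zero {s s₀ : ℂ} (hs : s.re = 0) (hs₀ : s₀.re ≤ 0) {x : ℝ}
    (hx : 0 < x) : s + M (exp s) ≠ s₀ + M (exp s₀) - x := by
  intro heq
  have hle : ‖s₀ - s - x‖ ≤ ‖s₀ - s‖ :=
    calc ‖s₀ - s - x‖ = ‖M (exp s) - M (exp s₀)‖ := by congr 1; linear_combination -heq
      _ ≤ ‖exp s - exp s₀‖ := by
        simpa using hM.norm_sub_le (mapsTo_exp_re_nonpos hs.le) (mapsTo_exp_re_nonpos hs₀)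
      _ ≤ ‖s - s₀‖ := norm_exp_sub_exp_le_of_re_nonpos hs.le hs₀
      _ = ‖s₀ - s‖ := norm_sub_rev _ _
  exact (norm_lt_norm_sub_ofReal (by simp [hs, hs₀]) hx).not_ge hle

theorem exists_add_comp_exp_eq_sub (hMd : DifferentiableOn ℂ M (ball 0 1)) {s₀ : ℂ}
    (hs₀ : s₀.re < 0) {x : ℝ} (hx : 0 ≤ x) :
    ∃ s : ℂ, s.re < 0 ∧ s + M (exp s) = s₀ + M (exp s₀) - x := by
  set Φ : ℂ → ℂ := fun s => s + M (exp s)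
  set p : ℝ → ℂ := fun x => Φ s₀ - x
  have hp : Continuous p := by fun_prop
  set U := p ⁻¹' (Φ '' {s | s.re < 0})
  have hU : IsOpen U := (isOpen_image_add_comp_exp hM hMd).preimage hp
  suffices Ici 0 ⊆ U from this hx
  refine isPreconnected_Ici.subset_of_closure_inter_subset hU
    ⟨0, self_mem_Ici, s₀, hs₀, by simp [p]⟩ ?_
  rintro y ⟨hyU, hy⟩
  rcases (mem_Ici.mp hy).eq_or_lt with rfl | hy
  · exact ⟨s₀, hs₀, by simp [p]⟩
  set Q := closedBall s₀ (y + 3) ∩ {s | s.re ≤ 0}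
  have hQ : IsClosed (p ⁻¹' (Φ '' Q)) :=
    ((isCompact_closedBall _ _).inter_right (isClosed_le continuous_re continuous_const)
      |>.image_of_continuousOn ((continuousOn_add_comp_exp hM).mono inter_subset_right)).isClosed
      |>.preimage hp
  have hnear : ball y 1 ∩ U ⊆ p ⁻¹' (Φ '' Q) := by
    rintro x' ⟨hx'y, s, hs : s.re < 0, hsx'⟩
    refine ⟨s, ⟨?_, hs.le⟩, hsx'⟩
    have hx' : |x'| ≤ y + 1 := by
      rw [mem_ball, Real.dist_eq] at hx'y
      linarith [abs_sub_abs_le_abs_sub x' y, abs_of_pos hy]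
    rw [mem_closedBall, dist_eq_norm]
    calc ‖s - s₀‖ = ‖-(x' : ℂ) + (M (exp s₀) - M (exp s))‖ := by
          congr 1; linear_combination hsx'
      _ ≤ |x'| + 2 := norm_add_le_of_le (by simp) (norm_sub_comp_exp_le_two hM hs₀.le hs.le)
      _ ≤ y + 3 := by linarith
  obtain ⟨s, ⟨-, hs⟩, hsy⟩ :=
    hQ.closure_subset_iff.mpr hnear (isOpen_ball.inter_closure ⟨mem_ball_self one_pos, hyU⟩)
  rcases (show s.re ≤ 0 from hs).lt_or_eq with hs | hs
  · exact ⟨s, hs, hsy⟩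
  · exact absurd hsy (add_comp_exp_ne_sub_of_re_eq_zero hM hs hs₀.le hy)

theorem starConvex_image_mul_exp (hMd : DifferentiableOn ℂ M (ball 0 1)) :
    StarConvex ℝ 0 ((fun w => w * exp (M w)) '' ball 0 1) := by
  rintro _ ⟨w₀, hw₀, rfl⟩ a b ha hb hab
  have hb₁ : b ≤ 1 := by linarith
  rw [smul_zero, zero_add, real_smul]
  rcases hb.eq_or_lt with rfl | hb
  · exact ⟨0, mem_ball_self one_pos, by simp⟩
  rcases eq_or_ne w₀ 0 with rfl | hw0
  · exact ⟨0, mem_ball_self one_pos, by simp⟩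
  have hlog : (log w₀).re < 0 := by
    rw [log_re]
    exact Real.log_neg (norm_pos_iff.mpr hw0) (mem_ball_zero_iff.mp hw₀)
  obtain ⟨s, hs, hseq⟩ :=
    exists_add_comp_exp_eq_sub hM hMd hlog (neg_nonneg.mpr (Real.log_nonpos hb.le hb₁))
  refine ⟨exp s, mapsTo_exp_re_neg hs, ?_⟩
  calc exp s * exp (M (exp s)) = exp (s + M (exp s)) := (exp_add _ _).symm
    _ = b * (w₀ * exp (M w₀)) := by
      rw [hseq, exp_sub, exp_add, exp_log hw0, ofReal_neg, exp_neg, ← ofReal_exp,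
        Real.exp_log hb]
      field_simp

end LipschitzExponent

theorem stmt11_general (z : ℕ → ℂ)
    (hmod : ∀ n, 1 < ‖z n‖)
    (hsum : Summable fun n => 1 / ‖z n‖)
    (f : ℂ → ℂ)
    (hf : ∀ w : ℂ, f w = w * ∏' n, (1 - w / z n))
    (h : ∑' n, 1 / (‖z n‖ - 1) ≤ 1) :
    Set.InjOn f (ball (0 : ℂ) 1) ∧ StarConvex ℝ (0 : ℂ) (f '' ball (0 : ℂ) 1) := by
  have hS : Summable fun n => 1 / (‖z n‖ - 1) :=
    hsum.one_div_sub_one fun n => (zero_lt_one.trans (hmod n)).ne'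
  have hfM : EqOn f (fun w => w * exp (∑' n, log (1 - w / z n))) (ball 0 1) := fun w hw => by
    rw [hf, tprod_one_sub_div_eq_exp_tsum hmod hS (mem_ball_zero_iff.mp hw).le]
  have hM := lipschitzOnWith_tsum_log_one_sub_div hmod hS h
  rw [hfM.image_eq]
  exact ⟨(injOn_mul_exp_of_lipschitzOnWith (hM.mono ball_subset_closedBall)).congr hfM.symm,
    starConvex_image_mul_exp hM (differentiableOn_tsum_log_one_sub_div hmod hS)⟩

/-- Sufficiency direction of the Shah–Trimble theorem: if all `z n` have the same argument,
`|z n| > 1`, `∑ 1/|z n|` converges, `f w = w ∏ (1 - w / z n)`, and `∑ 1/(|z n| - 1) ≤ 1`,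
then `f` is univalent on the unit disk and maps it onto a domain starlike w.r.t. `0`. -/
theorem stmt11 (z : ℕ → ℂ) (θ : ℝ) (harg : ∀ n, (z n).arg = θ)
    (hmod : ∀ n, 1 < ‖z n‖)
    (hsum : Summable fun n => 1 / ‖z n‖)
    (f : ℂ → ℂ)
    (hmul : ∀ w : ℂ, Multipliable fun n => 1 - w / z n)
    (hf : ∀ w : ℂ, f w = w * ∏' n, (1 - w / z n))
    (h : ∑' n, 1 / (‖z n‖ - 1) ≤ 1) :
    Set.InjOn f (ball (0 : ℂ) 1) ∧ StarConvex ℝ (0 : ℂ) (f '' ball (0 : ℂ) 1) :=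
  stmt11_general z hmod hsum f hf h
end

section
/- For ν > -1 the function Φ_ν(z) = J_{ν+1}(z) I_ν(z) + J_ν(z) I_{ν+1}(z) has an infinite sequence of positive zeros γ_{ν,1} < γ_{ν,2} < ..., and these satisfy the interlacing inequalities j_{ν,n} < γ_{ν,n} < j_{ν,n+1} and γ_{ν,n} < j_{ν+1,n} for all n ≥ 1, where j_{ν,n} is the n-th positive zero of J_ν. -/
noncomputable def besselJr (ν x : ℝ) : ℝ :=
  (x / 2) ^ ν * ∑' m : ℕ, (-1) ^ m * (x / 2) ^ (2 * m) / (m.factorial * Real.Gamma (ν + m + 1))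

noncomputable def besselIr (ν x : ℝ) : ℝ :=
  (x / 2) ^ ν * ∑' m : ℕ, (x / 2) ^ (2 * m) / (m.factorial * Real.Gamma (ν + m + 1))

/-- The cross product `Φ_ν(x) = J_{ν+1}(x) I_ν(x) + J_ν(x) I_{ν+1}(x)`. -/
noncomputable def crossProd (ν x : ℝ) : ℝ :=
  besselJr (ν + 1) x * besselIr ν x + besselJr ν x * besselIr (ν + 1) x

/-!
The sign of `J_ν` alternates from one gap between consecutive positive zeros to the next: if
`J_ν` kept its sign across a zero `b`, then `x^{-ν} J_ν` would have a local extremum at `b`,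
forcing `J_{ν+1}(b) = 0`, and then the identities `(x^{ν+1} J_{ν+1})' = x^{ν+1} J_ν` and
`(x^{-ν} J_ν)' = -x^{-ν} J_{ν+1}` would push `x^{-ν} J_ν` away from `0` on the wrong side.
Rolle's theorem applied to the same two identities interlaces the zeros: `j_n < j'_n < j_{n+1}`.
Since `I_ν, I_{ν+1} > 0`, the cross product `Φ_ν` is positive on `(0, j_0]` and has the sign of
`(-1)^{n+1}` on `[j'_n, j_{n+1}]`, so its values at `j_n` and `j'_n` have opposite signs. Hence
`Φ_ν` vanishes in `(j_n, j'_n)`, and only once there, because `(x Φ_ν)' = 2 x J_ν I_ν` has no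
zero in that gap.
-/

open Filter Set Topology

lemma Real.one_le_Gamma_of_two_le {s : ℝ} (hs : 2 ≤ s) : 1 ≤ Real.Gamma s :=
  Real.Gamma_two ▸ Real.Gamma_strictMonoOn_Ici.monotoneOn (mem_Ici.mpr le_rfl) hs hs

theorem IsPreconnected.pos_of_forall_ne_zero {X : Type*} [TopologicalSpace X] {s : Set X}
    {f : X → ℝ} (hs : IsPreconnected s) (hf : ContinuousOn f s) (hne : ∀ x ∈ s, f x ≠ 0)
    {a x : X} (ha : a ∈ s) (hfa : 0 < f a) (hx : x ∈ s) : 0 < f x := by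
  by_contra! hfx
  obtain ⟨c, hc, hfc⟩ := hs.intermediate_value hx ha hf ⟨hfx, hfa.le⟩
  exact hne c hc hfc

structure IsPosZeroEnum (f : ℝ → ℝ) (z : ℕ → ℝ) : Prop where
  strictMono : StrictMono z
  pos : ∀ n, 0 < z n
  apply_eq_zero : ∀ n, f (z n) = 0
  exists_eq : ∀ x, 0 < x → f x = 0 → ∃ n, x = z n

/-- The left end of the `n`-th gap `(0, z 0), (z 0, z 1), (z 1, z 2), …`. -/
def prevZero (z : ℕ → ℝ) : ℕ → ℝ
  | 0 => 0
  | n + 1 => z n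

namespace IsPosZeroEnum

variable {f : ℝ → ℝ} {z : ℕ → ℝ}

lemma prevZero_nonneg (hz : IsPosZeroEnum f z) (n : ℕ) : 0 ≤ prevZero z n := by
  cases n
  exacts [le_rfl, (hz.pos _).le]

lemma prevZero_lt (hz : IsPosZeroEnum f z) (n : ℕ) : prevZero z n < z n := by
  cases n
  exacts [hz.pos 0, hz.strictMono (Nat.lt_succ_self _)]

lemma prevZero_eq_zero_or (hz : IsPosZeroEnum f z) (n : ℕ) :
    prevZero z n = 0 ∨ f (prevZero z n) = 0 := by
  cases n
  exacts [Or.inl rfl, Or.inr (hz.apply_eq_zero _)]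

lemma apply_ne_zero (hz : IsPosZeroEnum f z) {n : ℕ} {x : ℝ}
    (hx : x ∈ Ioo (prevZero z n) (z n)) : f x ≠ 0 := by
  intro hfx
  obtain ⟨m, rfl⟩ := hz.exists_eq x ((hz.prevZero_nonneg n).trans_lt hx.1) hfx
  have hmn : m < n := hz.strictMono.lt_iff_lt.mp hx.2
  cases n with
  | zero => omega
  | succ k =>
    have : k < m := hz.strictMono.lt_iff_lt.mp hx.1
    omega

lemma tendsto_atTop (hz : IsPosZeroEnum f z) (hf : ∀ x, 0 < x → ContinuousAt f x) :
    Tendsto z atTop atTop := by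
  refine tendsto_atTop_atTop_of_monotone' hz.strictMono.monotone fun hbdd => ?_
  have hL0 : 0 < ⨆ n, z n := (hz.pos 0).trans_le (le_ciSup hbdd 0)
  have hlim := (hf _ hL0).tendsto.comp (tendsto_atTop_ciSup hz.strictMono.monotone hbdd)
  simp only [Function.comp_def, hz.apply_eq_zero] at hlim
  obtain ⟨m, hm⟩ := hz.exists_eq _ hL0 (tendsto_nhds_unique hlim tendsto_const_nhds)
  exact (hz.strictMono (Nat.lt_succ_self m)).not_ge (hm ▸ le_ciSup hbdd (m + 1))

end IsPosZeroEnum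

lemma interlace_of_exists {a b : ℕ → ℝ} (ha : StrictMono a) (hb : StrictMono b)
    (hab : ∀ n, ∃ m, a n < b m ∧ b m < a (n + 1))
    (hba : ∀ n, ∃ m, prevZero b n < a m ∧ a m < b n) (n : ℕ) :
    a n < b n ∧ b n < a (n + 1) := by
  induction n with
  | zero =>
    obtain ⟨m, -, hm⟩ := hba 0
    obtain ⟨k, -, hk⟩ := hab 0
    exact ⟨(ha.monotone m.zero_le).trans_lt hm, (hb.monotone k.zero_le).trans_lt hk⟩
  | succ n ih =>
    obtain ⟨m, hm, hm'⟩ := hba (n + 1)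
    obtain ⟨k, hk, hk'⟩ := hab (n + 1)
    have hnm : n < m := ha.lt_iff_lt.mp (ih.1.trans hm)
    have hnk : n < k := hb.lt_iff_lt.mp (ih.2.trans hk)
    exact ⟨(ha.monotone hnm).trans_lt hm', (hb.monotone hnk).trans_lt hk'⟩

namespace Bessel

noncomputable def seriesTerm (ε ν : ℝ) (m : ℕ) (x : ℝ) : ℝ :=
  ε ^ m * (x / 2) ^ (2 * m) / (m.factorial * Real.Gamma (ν + m + 1))

noncomputable def series (ε ν x : ℝ) : ℝ := ∑' m, seriesTerm ε ν m x

noncomputable def bessel (ε ν x : ℝ) : ℝ := (x / 2) ^ ν * series ε ν x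

lemma besselJr_eq_bessel (ν : ℝ) : besselJr ν = bessel (-1) ν := rfl

lemma besselIr_eq_bessel (ν : ℝ) : besselIr ν = bessel 1 ν := by
  funext x
  simp [besselIr, bessel, series, seriesTerm]

variable {ε ν : ℝ}

lemma add_nat_add_one_pos (hν : -1 < ν) (m : ℕ) : 0 < ν + m + 1 := by
  have := m.cast_nonneg (α := ℝ)
  linarith

lemma factorial_mul_Gamma_pos (hν : -1 < ν) (m : ℕ) :
    0 < (m.factorial : ℝ) * Real.Gamma (ν + m + 1) :=
  mul_pos (mod_cast m.factorial_pos) (Real.Gamma_pos_of_pos (add_nat_add_one_pos hν m))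

lemma norm_seriesTerm (hν : -1 < ν) (hε : |ε| = 1) (m : ℕ) (x : ℝ) :
    ‖seriesTerm ε ν m x‖ = seriesTerm 1 ν m |x| := by
  simp [seriesTerm, abs_of_pos (Real.Gamma_pos_of_pos (add_nat_add_one_pos hν m)), hε]

lemma seriesTerm_one_abs_le (hν : -1 < ν) (m : ℕ) {y R : ℝ} (hy : |y| ≤ R) :
    seriesTerm 1 ν m |y| ≤ seriesTerm 1 ν m R := by
  have := factorial_mul_Gamma_pos hν m
  unfold seriesTerm
  gcongr

lemma summable_seriesTerm (hν : -1 < ν) (hε : |ε| = 1) (x : ℝ) :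
    Summable (seriesTerm ε ν · x) := by
  refine .of_norm_bounded_eventually (Real.summable_pow_div_factorial ((x / 2) ^ 2)) ?_
  rw [Nat.cofinite_eq_atTop]
  filter_upwards [eventually_ge_atTop 2] with m hm
  have hΓ : 1 ≤ Real.Gamma (ν + m + 1) := Real.one_le_Gamma_of_two_le (by
    have : (2 : ℝ) ≤ m := mod_cast hm
    linarith)
  rw [norm_seriesTerm hν hε, seriesTerm, one_pow, one_mul, pow_mul, div_pow |x|, sq_abs,
    ← div_pow]
  have : (0 : ℝ) < m.factorial := mod_cast m.factorial_pos
  exact div_le_div_of_nonneg_left (by positivity) this (le_mul_of_one_le_right this.le hΓ)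

lemma hasDerivAt_seriesTerm_zero (x : ℝ) : HasDerivAt (seriesTerm ε ν 0) 0 x := by
  have : seriesTerm ε ν 0 = fun _ => (Real.Gamma (ν + 1))⁻¹ :=
    funext fun _ => by simp [seriesTerm]
  exact this ▸ hasDerivAt_const x _

lemma hasDerivAt_seriesTerm_succ (m : ℕ) (x : ℝ) :
    HasDerivAt (seriesTerm ε ν (m + 1)) (ε * (x / 2) * seriesTerm ε (ν + 1) m x) x := by
  have h := ((((hasDerivAt_id x).div_const 2).pow (2 * (m + 1))).const_mul (ε ^ (m + 1))).div_const
    ((m + 1).factorial * Real.Gamma (ν + (m + 1 : ℕ) + 1))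
  refine h.congr_deriv ?_
  simp only [seriesTerm, id, Nat.factorial_succ, show 2 * (m + 1) - 1 = 2 * m + 1 by omega]
  push_cast
  rw [show ν + (m + 1) + 1 = ν + 1 + m + 1 by ring]
  field_simp
  ring

lemma hasDerivAt_series (hν : -1 < ν) (hε : |ε| = 1) (x : ℝ) :
    HasDerivAt (series ε ν) (ε * (x / 2) * series ε (ν + 1) x) x := by
  have hν1 : -1 < ν + 1 := by linarith
  set R := |x| + 1
  have hx : x ∈ Ioo (-R) R := abs_lt.mp (by linarith)
  have htail := hasDerivAt_tsum_of_isPreconnected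
    (g := fun m => seriesTerm ε ν (m + 1)) (u := fun m => R / 2 * seriesTerm 1 (ν + 1) m R)
    ((summable_seriesTerm hν1 abs_one R).mul_left _) isOpen_Ioo isPreconnected_Ioo
    (fun m y _ => hasDerivAt_seriesTerm_succ m y)
    (fun m y hy => by
      have hyR : |y| ≤ R := (abs_lt.mpr hy).le
      rw [norm_mul, norm_mul, Real.norm_eq_abs, hε, one_mul, norm_seriesTerm hν1 hε,
        Real.norm_eq_abs, abs_div, abs_two]
      have := factorial_mul_Gamma_pos hν1 m
      exact mul_le_mul (by linarith) (seriesTerm_one_abs_le hν1 m hyR)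
        (by unfold seriesTerm; positivity) (by positivity))
    hx ((summable_nat_add_iff 1).mpr (summable_seriesTerm hν hε x)) hx
  have hsplit : series ε ν = fun y => seriesTerm ε ν 0 y + ∑' m, seriesTerm ε ν (m + 1) y :=
    funext fun y => (summable_seriesTerm hν hε y).tsum_eq_zero_add
  rw [hsplit, series, ← tsum_mul_left, ← zero_add (∑' m, _)]
  exact (hasDerivAt_seriesTerm_zero x).add htail

lemma series_zero (ε ν : ℝ) : series ε ν 0 = (Real.Gamma (ν + 1))⁻¹ := by
  rw [series, tsum_eq_single 0 fun m hm => by simp [seriesTerm, hm]]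
  simp [seriesTerm]

lemma series_one_pos (hν : -1 < ν) (x : ℝ) : 0 < series 1 ν x := by
  have hpos := factorial_mul_Gamma_pos hν
  refine (summable_seriesTerm hν abs_one x).tsum_pos (fun m => ?_) 0 ?_
  · have := hpos m
    rw [seriesTerm, one_pow, one_mul, pow_mul]
    positivity
  · have := hpos 0
    rw [seriesTerm, pow_zero, one_mul, mul_zero, pow_zero]
    positivity

lemma seriesTerm_eq_mul_seriesTerm_add_one (hν : -1 < ν) (m : ℕ) (x : ℝ) :
    seriesTerm ε ν m x = (ν + m + 1) * seriesTerm ε (ν + 1) m x := by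
  have hne := (add_nat_add_one_pos hν m).ne'
  have hΓ : Real.Gamma (ν + 1 + m + 1) = (ν + m + 1) * Real.Gamma (ν + m + 1) := by
    rw [show ν + 1 + m + 1 = ν + m + 1 + 1 by ring, Real.Gamma_add_one hne]
  rw [seriesTerm, seriesTerm, hΓ]
  field_simp

lemma succ_mul_seriesTerm_succ (m : ℕ) (x : ℝ) :
    (m + 1) * seriesTerm ε ν (m + 1) x = ε * (x / 2) ^ 2 * seriesTerm ε (ν + 1) m x := by
  rw [seriesTerm, seriesTerm, Nat.factorial_succ]
  push_cast
  rw [show ν + (m + 1) + 1 = ν + 1 + m + 1 by ring]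
  field_simp
  ring

lemma series_eq_add (hν : -1 < ν) (hε : |ε| = 1) (x : ℝ) :
    series ε ν x = (ν + 1) * series ε (ν + 1) x + ε * (x / 2) ^ 2 * series ε (ν + 2) x := by
  have hb := summable_seriesTerm (by linarith : -1 < ν + 1) hε x
  have hc := summable_seriesTerm (by linarith : -1 < ν + 2) hε x
  have hmb : Summable fun m : ℕ => (m : ℝ) * seriesTerm ε (ν + 1) m x := by
    refine (summable_nat_add_iff 1).mp ((hc.mul_left (ε * (x / 2) ^ 2)).congr fun m => ?_)
    rw [show ν + 2 = ν + 1 + 1 by ring, ← succ_mul_seriesTerm_succ]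
    push_cast
    rfl
  calc series ε ν x = ∑' m : ℕ, ((ν + 1) * seriesTerm ε (ν + 1) m x
          + m * seriesTerm ε (ν + 1) m x) :=
        tsum_congr fun m => by rw [seriesTerm_eq_mul_seriesTerm_add_one hν]; ring
    _ = (ν + 1) * series ε (ν + 1) x
          + ∑' m : ℕ, (m + 1 : ℕ) * seriesTerm ε (ν + 1) (m + 1) x := by
        rw [(hb.mul_left _).tsum_add hmb, tsum_mul_left, hmb.tsum_eq_zero_add]
        simp [series]
    _ = _ := by
        congr 1
        rw [series, ← tsum_mul_left, show ν + 2 = ν + 1 + 1 by ring]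
        refine tsum_congr fun m => ?_
        push_cast
        exact succ_mul_seriesTerm_succ m x

lemma continuous_series (hν : -1 < ν) (hε : |ε| = 1) : Continuous (series ε ν) :=
  continuous_iff_continuousAt.mpr fun x => (hasDerivAt_series hν hε x).continuousAt

lemma continuousAt_bessel (hν : -1 < ν) (hε : |ε| = 1) {x : ℝ} (hx : 0 < x) :
    ContinuousAt (bessel ε ν) x :=
  ((continuousAt_id.div_const 2).rpow_const (Or.inl (by positivity))).mul
    (continuous_series hν hε).continuousAt

lemma rpow_neg_mul_half_rpow {x : ℝ} (hx : 0 < x) (ν : ℝ) :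
    x ^ (-ν) * (x / 2) ^ ν = 2 ^ (-ν) := by
  rw [Real.div_rpow hx.le zero_le_two, Real.rpow_neg hx.le, Real.rpow_neg zero_le_two]
  have := Real.rpow_pos_of_pos hx ν
  have := Real.rpow_pos_of_pos two_pos ν
  field_simp

lemma hasDerivAt_rpow_neg_mul_bessel (hν : -1 < ν) (hε : |ε| = 1) {x : ℝ} (hx : 0 < x) :
    HasDerivAt (fun y => y ^ (-ν) * bessel ε ν y)
      (ε * (x ^ (-ν) * bessel ε (ν + 1) x)) x := by
  have hev : (fun y => (2 : ℝ) ^ (-ν) * series ε ν y) =ᶠ[𝓝 x]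
      fun y => y ^ (-ν) * bessel ε ν y := by
    filter_upwards [eventually_gt_nhds hx] with y hy
    rw [bessel, ← mul_assoc, rpow_neg_mul_half_rpow hy]
  refine (((hasDerivAt_series hν hε x).const_mul _).congr_of_eventuallyEq
    hev.symm).congr_deriv ?_
  rw [bessel, Real.rpow_add_one (by positivity), ← rpow_neg_mul_half_rpow hx]
  ring

lemma rpow_add_one_mul_bessel {x : ℝ} (hx : 0 ≤ x) :
    x ^ (ν + 1) * bessel ε (ν + 1) x = (x ^ 2 / 2) ^ (ν + 1) * series ε (ν + 1) x := by
  rw [bessel, ← mul_assoc, ← Real.mul_rpow hx (by positivity)]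
  ring_nf

lemma hasDerivAt_rpow_add_one_mul_bessel (hν : -1 < ν) (hε : |ε| = 1) {x : ℝ} (hx : 0 < x) :
    HasDerivAt (fun y => y ^ (ν + 1) * bessel ε (ν + 1) y)
      (x ^ (ν + 1) * bessel ε ν x) x := by
  have hx2 : 0 < x ^ 2 / 2 := by positivity
  have hev : (fun y => (y ^ 2 / 2) ^ (ν + 1) * series ε (ν + 1) y) =ᶠ[𝓝 x]
      fun y => y ^ (ν + 1) * bessel ε (ν + 1) y := by
    filter_upwards [eventually_gt_nhds hx] with y hy
    rw [rpow_add_one_mul_bessel hy.le]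
  have hsq : HasDerivAt (fun y : ℝ => y ^ 2 / 2) x x := by
    simpa using ((hasDerivAt_id x).pow 2).div_const 2
  have hd := ((hsq.rpow_const (p := ν + 1) (Or.inl hx2.ne')).mul
    (hasDerivAt_series (by linarith) hε x)).congr_of_eventuallyEq hev.symm
  refine hd.congr_deriv ?_
  have hmul : x ^ ν * (x / 2) ^ ν = (x ^ 2 / 2) ^ ν := by
    rw [← Real.mul_rpow hx.le (by positivity)]
    ring_nf
  rw [bessel, series_eq_add hν hε, add_sub_cancel_right, Real.rpow_add_one hx2.ne',
    Real.rpow_add_one hx.ne', ← hmul, show ν + 1 + 1 = ν + 2 by ring]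
  ring

lemma continuousOn_rpow_add_one_mul_bessel (hν : -1 < ν) (hε : |ε| = 1) :
    ContinuousOn (fun y => y ^ (ν + 1) * bessel ε (ν + 1) y) (Ici 0) := by
  have hF : Continuous fun y : ℝ => (y ^ 2 / 2) ^ (ν + 1) * series ε (ν + 1) y :=
    ((Real.continuous_rpow_const (by linarith)).comp (by fun_prop)).mul
      (continuous_series (by linarith) hε)
  exact hF.continuousOn.congr fun y hy => rpow_add_one_mul_bessel hy

lemma eventually_pos_bessel (hν : -1 < ν) (hε : |ε| = 1) :
    ∀ᶠ x in 𝓝[>] 0, 0 < bessel ε ν x := by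
  have h0 : 0 < series ε ν 0 := by
    rw [series_zero]
    exact inv_pos.mpr (Real.Gamma_pos_of_pos (by linarith))
  filter_upwards [self_mem_nhdsWithin, nhdsWithin_le_nhds
    ((continuous_series hν hε).continuousAt.eventually (eventually_gt_nhds h0))] with x hx hS
  exact mul_pos (Real.rpow_pos_of_pos (by linarith [mem_Ioi.mp hx]) ν) hS

lemma besselIr_pos (hν : -1 < ν) {x : ℝ} (hx : 0 < x) : 0 < besselIr ν x := by
  rw [besselIr_eq_bessel]
  exact mul_pos (Real.rpow_pos_of_pos (by positivity) ν) (series_one_pos hν x)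

lemma continuousAt_besselJr (hν : -1 < ν) {x : ℝ} (hx : 0 < x) :
    ContinuousAt (besselJr ν) x :=
  besselJr_eq_bessel ν ▸ continuousAt_bessel hν (by norm_num) hx

lemma continuousAt_besselIr (hν : -1 < ν) {x : ℝ} (hx : 0 < x) :
    ContinuousAt (besselIr ν) x :=
  besselIr_eq_bessel ν ▸ continuousAt_bessel hν abs_one hx

lemma hasDerivAt_rpow_neg_mul_besselJr (hν : -1 < ν) {x : ℝ} (hx : 0 < x) :
    HasDerivAt (fun y => y ^ (-ν) * besselJr ν y) (-(x ^ (-ν) * besselJr (ν + 1) x)) x := by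
  have h := hasDerivAt_rpow_neg_mul_bessel (ε := -1) hν (by norm_num) hx
  rwa [neg_one_mul] at h

lemma hasDerivAt_rpow_neg_mul_besselIr (hν : -1 < ν) {x : ℝ} (hx : 0 < x) :
    HasDerivAt (fun y => y ^ (-ν) * besselIr ν y) (x ^ (-ν) * besselIr (ν + 1) x) x := by
  simpa [besselIr_eq_bessel] using hasDerivAt_rpow_neg_mul_bessel (ε := 1) hν abs_one hx

lemma hasDerivAt_rpow_add_one_mul_besselJr (hν : -1 < ν) {x : ℝ} (hx : 0 < x) :
    HasDerivAt (fun y => y ^ (ν + 1) * besselJr (ν + 1) y) (x ^ (ν + 1) * besselJr ν x) x :=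
  hasDerivAt_rpow_add_one_mul_bessel hν (by norm_num) hx

lemma hasDerivAt_rpow_add_one_mul_besselIr (hν : -1 < ν) {x : ℝ} (hx : 0 < x) :
    HasDerivAt (fun y => y ^ (ν + 1) * besselIr (ν + 1) y) (x ^ (ν + 1) * besselIr ν x) x := by
  simpa [besselIr_eq_bessel] using hasDerivAt_rpow_add_one_mul_bessel (ε := 1) hν abs_one hx

lemma exists_besselJr_add_one_eq_zero_mem_Ioo (hν : -1 < ν) {a b : ℝ} (ha : 0 < a) (hab : a < b)
    (hJa : besselJr ν a = 0) (hJb : besselJr ν b = 0) :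
    ∃ c ∈ Ioo a b, besselJr (ν + 1) c = 0 := by
  have hd (x : ℝ) (hx : a ≤ x) := hasDerivAt_rpow_neg_mul_besselJr hν (ha.trans_le hx)
  obtain ⟨c, hc, hd⟩ := exists_hasDerivAt_eq_zero hab
    (fun x hx => (hd x hx.1).continuousAt.continuousWithinAt) (by simp [hJa, hJb])
    fun x hx => hd x hx.1.le
  exact ⟨c, hc, (mul_eq_zero.mp (neg_eq_zero.mp hd)).resolve_left
    (Real.rpow_pos_of_pos (ha.trans hc.1) _).ne'⟩

lemma exists_besselJr_eq_zero_mem_Ioo (hν : -1 < ν) {a b : ℝ} (ha : 0 ≤ a) (hab : a < b)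
    (hJa : a = 0 ∨ besselJr (ν + 1) a = 0) (hJb : besselJr (ν + 1) b = 0) :
    ∃ c ∈ Ioo a b, besselJr ν c = 0 := by
  have hGa : a ^ (ν + 1) * besselJr (ν + 1) a = 0 := by
    rcases hJa with rfl | hJa
    · rw [Real.zero_rpow (by linarith), zero_mul]
    · rw [hJa, mul_zero]
  have hcont : ContinuousOn (fun y => y ^ (ν + 1) * besselJr (ν + 1) y) (Ici 0) :=
    continuousOn_rpow_add_one_mul_bessel hν (by norm_num)
  obtain ⟨c, hc, hd⟩ := exists_hasDerivAt_eq_zero hab (hcont.mono fun x hx => ha.trans hx.1)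
    (by rw [hGa, hJb, mul_zero])
    fun x hx => hasDerivAt_rpow_add_one_mul_besselJr hν (ha.trans_lt hx.1)
  exact ⟨c, hc,
    (mul_eq_zero.mp hd).resolve_left (Real.rpow_pos_of_pos (ha.trans_lt hc.1) _).ne'⟩

theorem besselJr_zeros_interlace (hν : -1 < ν) {j j' : ℕ → ℝ}
    (hj : IsPosZeroEnum (besselJr ν) j) (hj' : IsPosZeroEnum (besselJr (ν + 1)) j') (n : ℕ) :
    j n < j' n ∧ j' n < j (n + 1) := by
  refine interlace_of_exists hj.strictMono hj'.strictMono (fun n => ?_) (fun n => ?_) n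
  · obtain ⟨c, hc, hJc⟩ := exists_besselJr_add_one_eq_zero_mem_Ioo hν (hj.pos n)
      (hj.strictMono (Nat.lt_succ_self n)) (hj.apply_eq_zero n) (hj.apply_eq_zero _)
    obtain ⟨m, rfl⟩ := hj'.exists_eq c ((hj.pos n).trans hc.1) hJc
    exact ⟨m, hc⟩
  · obtain ⟨c, hc, hJc⟩ := exists_besselJr_eq_zero_mem_Ioo hν (hj'.prevZero_nonneg n)
      (hj'.prevZero_lt n) (hj'.prevZero_eq_zero_or n) (hj'.apply_eq_zero n)
    obtain ⟨m, rfl⟩ := hj.exists_eq c ((hj'.prevZero_nonneg n).trans_lt hc.1) hJc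
    exact ⟨m, hc⟩

lemma besselJr_add_one_eq_zero_of_pos_around (hν : -1 < ν) {σ a b c : ℝ} (ha : 0 ≤ a)
    (hab : a < b) (hbc : b < c) (hb : besselJr ν b = 0)
    (h : ∀ x ∈ Ioo a c, x ≠ b → 0 < σ * besselJr ν x) : besselJr (ν + 1) b = 0 := by
  have hb0 : 0 < b := ha.trans_lt hab
  have hσ : σ ≠ 0 :=
    left_ne_zero_of_mul (h ((b + c) / 2) ⟨by linarith, by linarith⟩ (by linarith)).ne'
  have hmin : IsLocalMin (fun y => σ * (y ^ (-ν) * besselJr ν y)) b := by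
    filter_upwards [Ioo_mem_nhds hab hbc] with y hy
    rcases eq_or_ne y b with rfl | hyb
    · exact le_rfl
    rw [hb, mul_zero, mul_zero, mul_left_comm]
    exact (mul_pos (Real.rpow_pos_of_pos (ha.trans_lt hy.1) _) (h y hy hyb)).le
  have hd := hmin.hasDerivAt_eq_zero ((hasDerivAt_rpow_neg_mul_besselJr hν hb0).const_mul σ)
  simpa [hσ, (Real.rpow_pos_of_pos hb0 _).ne'] using hd

lemma not_forall_pos_of_besselJr_eq_zero (hν : -1 < ν) {σ b c : ℝ} (hb0 : 0 < b) (hbc : b < c)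
    (hb : besselJr ν b = 0) (hb1 : besselJr (ν + 1) b = 0)
    (h : ∀ x ∈ Ioo b c, 0 < σ * besselJr ν x) : False := by
  set u := fun y => σ * (y ^ (-ν) * besselJr ν y)
  set v := fun y => σ * (y ^ (ν + 1) * besselJr (ν + 1) y)
  have hu (x : ℝ) (hx : b ≤ x) :=
    (hasDerivAt_rpow_neg_mul_besselJr hν (hb0.trans_le hx)).const_mul σ
  have hv (x : ℝ) (hx : b ≤ x) :=
    (hasDerivAt_rpow_add_one_mul_besselJr hν (hb0.trans_le hx)).const_mul σ
  have hmem : b ∈ Icc b c := left_mem_Icc.mpr hbc.le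
  have hv_mono : StrictMonoOn v (Icc b c) := by
    refine strictMonoOn_of_deriv_pos (convex_Icc b c)
      (fun x hx => (hv x hx.1).continuousAt.continuousWithinAt) fun x hx => ?_
    rw [interior_Icc] at hx
    rw [(hv x hx.1.le).deriv, mul_left_comm]
    exact mul_pos (Real.rpow_pos_of_pos (hb0.trans hx.1) _) (h x hx)
  have hu_anti : StrictAntiOn u (Icc b c) := by
    refine strictAntiOn_of_deriv_neg (convex_Icc b c)
      (fun x hx => (hu x hx.1).continuousAt.continuousWithinAt) fun x hx => ?_
    rw [interior_Icc] at hx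
    have hx0 := hb0.trans hx.1
    have hvx : v b < v x := hv_mono hmem (Ioo_subset_Icc_self hx) hx.1
    simp only [v, hb1, mul_zero] at hvx
    rw [mul_left_comm] at hvx
    rw [(hu x hx.1.le).deriv, mul_neg, mul_left_comm, neg_lt_zero]
    exact mul_pos (Real.rpow_pos_of_pos hx0 _)
      (pos_of_mul_pos_right hvx (Real.rpow_pos_of_pos hx0 _).le)
  have hm : (b + c) / 2 ∈ Ioo b c := ⟨by linarith, by linarith⟩
  have hum : u ((b + c) / 2) < u b := hu_anti hmem (Ioo_subset_Icc_self hm) hm.1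
  simp only [u, hb, mul_zero] at hum
  rw [mul_left_comm] at hum
  exact hum.not_gt (mul_pos (Real.rpow_pos_of_pos (hb0.trans hm.1) _) (h _ hm))

lemma besselJr_sign_flip (hν : -1 < ν) {σ a b c : ℝ} (ha : 0 ≤ a) (hab : a < b) (hbc : b < c)
    (hb : besselJr ν b = 0) (hleft : ∀ x ∈ Ioo a b, 0 < σ * besselJr ν x)
    (hright : ∀ x ∈ Ioo b c, besselJr ν x ≠ 0) :
    ∀ x ∈ Ioo b c, 0 < -σ * besselJr ν x := by
  have hσ : σ ≠ 0 :=
    left_ne_zero_of_mul (hleft ((a + b) / 2) ⟨by linarith, by linarith⟩).ne'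
  have hcont (τ : ℝ) : ContinuousOn (fun x => τ * besselJr ν x) (Ioo b c) := fun x hx =>
    (continuousAt_const.mul
      (continuousAt_besselJr hν (ha.trans_lt (hab.trans hx.1)))).continuousWithinAt
  have hne (τ : ℝ) (hτ : τ ≠ 0) : ∀ x ∈ Ioo b c, τ * besselJr ν x ≠ 0 := fun x hx =>
    mul_ne_zero hτ (hright x hx)
  have hm : (b + c) / 2 ∈ Ioo b c := ⟨by linarith, by linarith⟩
  refine fun x hx => isPreconnected_Ioo.pos_of_forall_ne_zero (hcont _)
    (hne _ (neg_ne_zero.mpr hσ)) hm ?_ hx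
  by_contra! hneg
  have hpos : 0 < σ * besselJr ν ((b + c) / 2) :=
    (by linarith : 0 ≤ σ * besselJr ν ((b + c) / 2)).lt_of_ne (hne σ hσ _ hm).symm
  have hright_pos : ∀ y ∈ Ioo b c, 0 < σ * besselJr ν y := fun y hy =>
    isPreconnected_Ioo.pos_of_forall_ne_zero (hcont σ) (hne σ hσ) hm hpos hy
  refine not_forall_pos_of_besselJr_eq_zero hν (ha.trans_lt hab) hbc hb ?_ hright_pos
  refine besselJr_add_one_eq_zero_of_pos_around (σ := σ) hν ha hab hbc hb fun y hy hyb => ?_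
  rcases hyb.lt_or_gt with hyb | hyb
  exacts [hleft y ⟨hy.1, hyb⟩, hright_pos y ⟨hyb, hy.2⟩]

theorem besselJr_sign (hν : -1 < ν) {z : ℕ → ℝ} (hz : IsPosZeroEnum (besselJr ν) z) :
    ∀ n, ∀ x ∈ Ioo (prevZero z n) (z n), 0 < (-1) ^ n * besselJr ν x
  | 0 => by
    have hgap : ∀ᶠ y in 𝓝[>] 0, y ∈ Ioo 0 (z 0) := Ioo_mem_nhdsGT (hz.pos 0)
    obtain ⟨y, hy, hJy⟩ :=
      (hgap.and (eventually_pos_bessel (ε := -1) hν (by norm_num))).exists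
    intro x hx
    rw [pow_zero, one_mul]
    exact isPreconnected_Ioo.pos_of_forall_ne_zero
      (fun t ht => (continuousAt_besselJr hν ht.1).continuousWithinAt)
      (fun t ht => hz.apply_ne_zero (n := 0) ht) hy hJy hx
  | n + 1 => by
    have := besselJr_sign_flip hν (hz.prevZero_nonneg n) (hz.prevZero_lt n)
      (hz.strictMono (Nat.lt_succ_self n)) (hz.apply_eq_zero n) (besselJr_sign hν hz n)
      fun x hx => hz.apply_ne_zero (n := n + 1) hx
    intro x hx
    rw [pow_succ, mul_neg_one]
    exact this x hx

lemma besselJr_sign_nonneg (hν : -1 < ν) {z : ℕ → ℝ} (hz : IsPosZeroEnum (besselJr ν) z)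
    {n : ℕ} {x : ℝ} (hx0 : 0 < x) (hx : x ∈ Icc (prevZero z n) (z n)) :
    0 ≤ (-1) ^ n * besselJr ν x := by
  rcases hx.2.eq_or_lt with rfl | hlt
  · rw [hz.apply_eq_zero, mul_zero]
  rcases hx.1.eq_or_lt with heq | hgt
  · rcases hz.prevZero_eq_zero_or n with h0 | h0
    · exact absurd (heq ▸ h0) hx0.ne'
    · rw [← heq, h0, mul_zero]
  · exact (besselJr_sign hν hz n x ⟨hgt, hlt⟩).le

lemma continuousAt_crossProd (hν : -1 < ν) {x : ℝ} (hx : 0 < x) :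
    ContinuousAt (crossProd ν) x :=
  ((continuousAt_besselJr (by linarith) hx).mul (continuousAt_besselIr hν hx)).add
    ((continuousAt_besselJr hν hx).mul (continuousAt_besselIr (by linarith) hx))

lemma hasDerivAt_mul_crossProd (hν : -1 < ν) {x : ℝ} (hx : 0 < x) :
    HasDerivAt (fun y => y * crossProd ν y) (2 * x * besselJr ν x * besselIr ν x) x := by
  have hprod {y : ℝ} (hy : 0 < y) : y ^ (ν + 1) * y ^ (-ν) = y := by
    rw [← Real.rpow_add hy, add_neg_cancel_comm, Real.rpow_one]
  have hev : (fun y => (y ^ (ν + 1) * besselJr (ν + 1) y) * (y ^ (-ν) * besselIr ν y)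
      + (y ^ (-ν) * besselJr ν y) * (y ^ (ν + 1) * besselIr (ν + 1) y)) =ᶠ[𝓝 x]
      fun y => y * crossProd ν y := by
    filter_upwards [eventually_gt_nhds hx] with y hy
    rw [crossProd]
    linear_combination (besselJr (ν + 1) y * besselIr ν y + besselJr ν y * besselIr (ν + 1) y)
      * hprod hy
  have hd := ((hasDerivAt_rpow_add_one_mul_besselJr hν hx).mul
      (hasDerivAt_rpow_neg_mul_besselIr hν hx)).add
    ((hasDerivAt_rpow_neg_mul_besselJr hν hx).mul (hasDerivAt_rpow_add_one_mul_besselIr hν hx))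
  refine (hd.congr_of_eventuallyEq hev.symm).congr_deriv ?_
  linear_combination (2 * besselJr ν x * besselIr ν x) * hprod hx

lemma mul_crossProd_pos (hν : -1 < ν) {σ x : ℝ} (hx : 0 < x) (hJ : 0 ≤ σ * besselJr ν x)
    (hJ1 : 0 ≤ σ * besselJr (ν + 1) x)
    (h : 0 < σ * besselJr ν x ∨ 0 < σ * besselJr (ν + 1) x) :
    0 < σ * crossProd ν x := by
  have hI := besselIr_pos hν hx
  have hI1 := besselIr_pos (ν := ν + 1) (by linarith) hx
  rw [show σ * crossProd ν x = σ * besselJr (ν + 1) x * besselIr ν x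
    + σ * besselJr ν x * besselIr (ν + 1) x by rw [crossProd]; ring]
  rcases h with h | h
  · exact add_pos_of_nonneg_of_pos (mul_nonneg hJ1 hI.le) (mul_pos h hI1)
  · exact add_pos_of_pos_of_nonneg (mul_pos h hI) (mul_nonneg hJ hI1.le)

variable {j j' : ℕ → ℝ}

lemma crossProd_pos_of_le (hν : -1 < ν) (hj : IsPosZeroEnum (besselJr ν) j)
    (hj' : IsPosZeroEnum (besselJr (ν + 1)) j') {x : ℝ} (hx : 0 < x) (hxj : x ≤ j 0) :
    0 < crossProd ν x := by
  have hJ1 := besselJr_sign (by linarith) hj' 0 x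
    ⟨hx, hxj.trans_lt (besselJr_zeros_interlace hν hj hj' 0).1⟩
  simpa using mul_crossProd_pos hν hx (besselJr_sign_nonneg hν hj (n := 0) hx ⟨hx.le, hxj⟩)
    hJ1.le (Or.inr hJ1)

lemma neg_one_pow_mul_crossProd_pos (hν : -1 < ν) (hj : IsPosZeroEnum (besselJr ν) j)
    (hj' : IsPosZeroEnum (besselJr (ν + 1)) j') {n : ℕ} {x : ℝ}
    (hx : x ∈ Icc (j' n) (j (n + 1))) :
    0 < (-1) ^ (n + 1) * crossProd ν x := by
  have hν1 : -1 < ν + 1 := by linarith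
  have hint := besselJr_zeros_interlace hν hj hj' n
  have hint' := besselJr_zeros_interlace hν hj hj' (n + 1)
  have hx0 : 0 < x := (hj'.pos n).trans_le hx.1
  refine mul_crossProd_pos hν hx0
    (besselJr_sign_nonneg hν hj hx0 ⟨(hint.1.trans_le hx.1).le, hx.2⟩)
    (besselJr_sign_nonneg hν1 hj' hx0 ⟨hx.1, (hx.2.trans_lt hint'.1).le⟩) ?_
  rcases hx.2.lt_or_eq with hlt | rfl
  · exact Or.inl (besselJr_sign hν hj (n + 1) x ⟨hint.1.trans_le hx.1, hlt⟩)
  · exact Or.inr (besselJr_sign hν1 hj' (n + 1) _ ⟨hint.2, hint'.1⟩)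

lemma exists_crossProd_eq_zero (hν : -1 < ν) (hj : IsPosZeroEnum (besselJr ν) j)
    (hj' : IsPosZeroEnum (besselJr (ν + 1)) j') (n : ℕ) :
    ∃ x ∈ Ioo (j n) (j' n), crossProd ν x = 0 := by
  have hint := besselJr_zeros_interlace hν hj hj' n
  have hleft : 0 < (-1) ^ n * crossProd ν (j n) := by
    cases n with
    | zero => simpa using crossProd_pos_of_le hν hj hj' (hj.pos 0) le_rfl
    | succ k =>
      exact neg_one_pow_mul_crossProd_pos hν hj hj'
        ⟨(besselJr_zeros_interlace hν hj hj' k).2.le, le_rfl⟩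
  have hright : (-1) ^ n * crossProd ν (j' n) < 0 := by
    have := neg_one_pow_mul_crossProd_pos hν hj hj' (n := n) ⟨le_rfl, hint.2.le⟩
    rw [pow_succ, mul_neg_one, neg_mul] at this
    linarith
  have hcont : ContinuousOn (fun x => (-1) ^ n * crossProd ν x) (Icc (j n) (j' n)) :=
    fun x hx => (continuousAt_const.mul
      (continuousAt_crossProd hν ((hj.pos n).trans_le hx.1))).continuousWithinAt
  obtain ⟨c, hc, hc0⟩ := intermediate_value_Ioo' hint.1.le hcont ⟨hright, hleft⟩
  exact ⟨c, hc, (mul_eq_zero.mp hc0).resolve_left (pow_ne_zero _ (by norm_num))⟩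

lemma crossProd_eq_zero_unique (hν : -1 < ν) (hj : IsPosZeroEnum (besselJr ν) j)
    (hj' : IsPosZeroEnum (besselJr (ν + 1)) j') {n : ℕ} {x y : ℝ} (hx : x ∈ Ioo (j n) (j' n))
    (hy : y ∈ Ioo (j n) (j' n)) (hfx : crossProd ν x = 0) (hfy : crossProd ν y = 0) :
    x = y := by
  wlog hxy : x < y generalizing x y
  · rcases (not_lt.mp hxy).eq_or_lt with h | h
    exacts [h.symm, (this hy hx hfy hfx h).symm]
  have hx0 : 0 < x := (hj.pos n).trans hx.1
  have hd (t : ℝ) (ht : x ≤ t) := hasDerivAt_mul_crossProd hν (hx0.trans_le ht)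
  obtain ⟨c, hc, hd⟩ := exists_hasDerivAt_eq_zero hxy
    (fun t ht => (hd t ht.1).continuousAt.continuousWithinAt)
    (by rw [hfx, hfy, mul_zero, mul_zero]) fun t ht => hd t ht.1.le
  have hc0 := hx0.trans hc.1
  have hJc : besselJr ν c = 0 := by
    simpa [hc0.ne', (besselIr_pos hν hc0).ne'] using hd
  exact absurd hJc (hj.apply_ne_zero (n := n + 1)
    ⟨hx.1.trans hc.1, hc.2.trans (hy.2.trans (besselJr_zeros_interlace hν hj hj' n).2)⟩)

lemma exists_mem_Ioo_of_crossProd_eq_zero (hν : -1 < ν) (hj : IsPosZeroEnum (besselJr ν) j)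
    (hj' : IsPosZeroEnum (besselJr (ν + 1)) j') {x : ℝ} (hx : 0 < x) (hfx : crossProd ν x = 0) :
    ∃ n, x ∈ Ioo (j n) (j' n) := by
  rcases le_or_gt x (j 0) with h0 | h0
  · exact absurd hfx (crossProd_pos_of_le hν hj hj' hx h0).ne'
  obtain ⟨n, hn, hn'⟩ := hj.strictMono.exists_between_of_tendsto_atTop
    (hj.tendsto_atTop fun y hy => continuousAt_besselJr hν hy) h0
  refine ⟨n, hn, lt_of_not_ge fun h => ?_⟩
  have := neg_one_pow_mul_crossProd_pos hν hj hj' ⟨h, hn'⟩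
  rw [hfx, mul_zero] at this
  exact this.false

end Bessel

open Bessel

/-- For `ν > -1`, `Φ_ν` has an increasing sequence `γ` of positive zeros exhausting all of its
positive zeros, interlacing with the positive zeros `j` of `J_ν` and `j'` of `J_{ν+1}`:
`j_n < γ_n < j_{n+1}` and `γ_n < j'_n`. -/
theorem stmt14 (ν : ℝ) (hν : -1 < ν)
    (j : ℕ → ℝ) (hjmono : StrictMono j)
    (hjzero : ∀ n, 0 < j n ∧ besselJr ν (j n) = 0)
    (hjall : ∀ x : ℝ, 0 < x → besselJr ν x = 0 → ∃ n, x = j n)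
    (j' : ℕ → ℝ) (hj'mono : StrictMono j')
    (hj'zero : ∀ n, 0 < j' n ∧ besselJr (ν + 1) (j' n) = 0)
    (hj'all : ∀ x : ℝ, 0 < x → besselJr (ν + 1) x = 0 → ∃ n, x = j' n) :
    ∃ γ : ℕ → ℝ, StrictMono γ ∧ (∀ n, 0 < γ n ∧ crossProd ν (γ n) = 0) ∧
      (∀ x : ℝ, 0 < x → crossProd ν x = 0 → ∃ n, x = γ n) ∧
      ∀ n, j n < γ n ∧ γ n < j (n + 1) ∧ γ n < j' n := by
  have hj : IsPosZeroEnum (besselJr ν) j :=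
    ⟨hjmono, fun n => (hjzero n).1, fun n => (hjzero n).2, hjall⟩
  have hj' : IsPosZeroEnum (besselJr (ν + 1)) j' :=
    ⟨hj'mono, fun n => (hj'zero n).1, fun n => (hj'zero n).2, hj'all⟩
  have hint := besselJr_zeros_interlace hν hj hj'
  choose γ hγ hγ0 using exists_crossProd_eq_zero hν hj hj'
  refine ⟨γ, strictMono_nat_of_lt_succ fun n => ?_,
    fun n => ⟨(hj.pos n).trans (hγ n).1, hγ0 n⟩, fun x hx hfx => ?_,
    fun n => ⟨(hγ n).1, (hγ n).2.trans (hint n).2, (hγ n).2⟩⟩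
  · exact (hγ n).2.trans ((hint n).2.trans (hγ (n + 1)).1)
  · obtain ⟨n, hn⟩ := exists_mem_Ioo_of_crossProd_eq_zero hν hj hj' hx hfx
    exact ⟨n, crossProd_eq_zero_unique hν hj hj' hn (hγ n) hfx (hγ0 n)⟩
end
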